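/- arXiv:2306.04232 — 3 statements merged into one kernel-verified Lean document; each statement's English description precedes it below -/
import Mathlib

section
/- Let p ≥ 2, a > 0, b ≥ 0, q = (p-1)/2, and let g : [0,a] → ℝ be bounded and measurable with lim_{w→a⁻} g(w)/(a-w)^b = 1. Define H(y) = y^(-(b+q)) · ∫_0^y g(v + a - y) f_{p-1}(v) dv for y ∈ (0,a], where f_{p-1} is the chi-squared density with p-1 degrees of freedom. Then lim_{y→0⁺} H(y) = Γ(b+1) / (Γ(b + (p+1)/2) · 2^((p-1)/2)). -/
open MeasureTheory Real Filter

/-- Density of the chi-squared distribution with `k` degrees of freedom (for `v > 0`). -/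
noncomputable def chiSqPDF (k : ℝ) (v : ℝ) : ℝ :=
  v ^ (k / 2 - 1) * Real.exp (-v / 2) / (Real.Gamma (k / 2) * 2 ^ (k / 2))

/-- `H(y) = y^{-(b+q)} ∫_0^y g(v + a - y) f_{p-1}(v) dv`, with `q = (p-1)/2`. -/
noncomputable def Hfun (p : ℕ) (a b : ℝ) (g : ℝ → ℝ) (y : ℝ) : ℝ :=
  y ^ (-(b + ((p : ℝ) - 1) / 2)) *
    ∫ v in Set.Ioo (0 : ℝ) y, g (v + a - y) * chiSqPDF ((p : ℝ) - 1) v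

/-!
The substitution `v = y t` gives
`H(y) = (Γ(q) 2^q)⁻¹ ∫₀¹ y^{-b} g(a - y(1-t)) t^{q-1} e^{-yt/2} dt`.
Since `g(w) ~ (a-w)^b` as `w → a⁻`, the factor `y^{-b} g(a - y(1-t))` tends to `(1-t)^b` and is
bounded by `2 (1-t)^b` once `y` is small, so by dominated convergence `H(y)` tends to
`(Γ(q) 2^q)⁻¹ B(q, b+1) = Γ(b+1) / (Γ(q+b+1) 2^q)`.
-/

open Set Topology

theorem integral_Ioo_rpow_mul_one_sub_rpow {u v : ℝ} (hu : 0 < u) (hv : 0 < v) :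
    ∫ x in Ioo (0 : ℝ) 1, x ^ (u - 1) * (1 - x) ^ (v - 1) =
      Gamma u * Gamma v / Gamma (u + v) := by
  have key := Complex.Gamma_mul_Gamma_eq_betaIntegral (s := u) (t := v)
    (by simpa using hu) (by simpa using hv)
  have hB : Complex.betaIntegral u v =
      ((∫ x in Ioo (0 : ℝ) 1, x ^ (u - 1) * (1 - x) ^ (v - 1) : ℝ) : ℂ) := by
    rw [Complex.betaIntegral, ← integral_Ioc_eq_integral_Ioo,
      intervalIntegral.integral_of_le zero_le_one, ← integral_complex_ofReal]
    refine setIntegral_congr_fun measurableSet_Ioc fun x hx => ?_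
    rw [Complex.ofReal_mul, Complex.ofReal_cpow hx.1.le,
      Complex.ofReal_cpow (sub_nonneg.mpr hx.2)]
    push_cast
    ring_nf
  rw [hB, ← Complex.ofReal_add, Complex.Gamma_ofReal, Complex.Gamma_ofReal,
    Complex.Gamma_ofReal, ← Complex.ofReal_mul, ← Complex.ofReal_mul] at key
  rw [Complex.ofReal_injective key,
    mul_div_cancel_left₀ _ (Gamma_pos_of_pos (add_pos hu hv)).ne']

theorem integral_Ioo_zero_eq_mul_integral_comp_mul {y : ℝ} (hy : 0 ≤ y) (f : ℝ → ℝ) :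
    ∫ v in Ioo 0 y, f v = y * ∫ t in Ioo (0 : ℝ) 1, f (y * t) := by
  have h := intervalIntegral.smul_integral_comp_mul_left (a := 0) (b := 1) f y
  rw [mul_zero, mul_one, intervalIntegral.integral_of_le zero_le_one,
    intervalIntegral.integral_of_le hy, integral_Ioc_eq_integral_Ioo,
    integral_Ioc_eq_integral_Ioo, smul_eq_mul] at h
  exact h.symm

theorem chiSqPDF_mul {k y t : ℝ} (hy : 0 ≤ y) (ht : 0 ≤ t) :
    chiSqPDF k (y * t) = y ^ (k / 2 - 1) * (t ^ (k / 2 - 1) * exp (-(y * t) / 2)) /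
      (Gamma (k / 2) * 2 ^ (k / 2)) := by
  rw [chiSqPDF, mul_rpow hy ht]
  ring

theorem Hfun_eq_integral_Ioo_zero_one {p : ℕ} {a b q y : ℝ} (g : ℝ → ℝ)
    (hq : q = ((p : ℝ) - 1) / 2) (hy : 0 < y) :
    Hfun p a b g y = (Gamma q * 2 ^ q)⁻¹ * ∫ t in Ioo (0 : ℝ) 1,
      y ^ (-b) * g (a - y * (1 - t)) * (t ^ (q - 1) * exp (-(y * t) / 2)) := by
  have hpow : y ^ (-(b + q)) * y * y ^ (q - 1) = y ^ (-b) :=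
    calc y ^ (-(b + q)) * y * y ^ (q - 1) = y ^ (-(b + q) + 1 + (q - 1)) := by
          rw [rpow_add hy, rpow_add hy, rpow_one]
      _ = y ^ (-b) := by ring_nf
  have hsubst : ∫ t in Ioo (0 : ℝ) 1, g (y * t + a - y) * chiSqPDF ((p : ℝ) - 1) (y * t) =
      y ^ (q - 1) * (Gamma q * 2 ^ q)⁻¹ *
        ∫ t in Ioo (0 : ℝ) 1, g (a - y * (1 - t)) * (t ^ (q - 1) * exp (-(y * t) / 2)) := by
    rw [← integral_const_mul]
    refine setIntegral_congr_fun measurableSet_Ioo fun t ht => ?_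
    rw [chiSqPDF_mul hy.le ht.1.le, ← hq, show y * t + a - y = a - y * (1 - t) by ring]
    ring
  simp only [Hfun, ← hq]
  simp_rw [mul_assoc (y ^ (-b))]
  rw [integral_Ioo_zero_eq_mul_integral_comp_mul hy.le, hsubst, integral_const_mul, ← hpow]
  ring

theorem eventually_abs_le_two_mul_of_tendsto_div {α : Type*} {l : Filter α} {f h : α → ℝ}
    (hlim : Tendsto (fun x => f x / h x) l (𝓝 1)) (hpos : ∀ᶠ x in l, 0 < h x) :
    ∀ᶠ x in l, |f x| ≤ 2 * h x := by
  filter_upwards [hlim.abs.eventually (gt_mem_nhds (by norm_num : |(1 : ℝ)| < 2)), hpos]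
    with x hx hx0
  rw [abs_div, abs_of_pos hx0, div_lt_iff₀ hx0] at hx
  exact hx.le

section Rescaling

variable {a b : ℝ} {g : ℝ → ℝ}

theorem eventually_forall_abs_rpow_neg_mul_le
    (hlim : Tendsto (fun w => g w / (a - w) ^ b) (𝓝[<] a) (𝓝 1)) :
    ∀ᶠ y in 𝓝[>] 0, ∀ s ∈ Ioc (0 : ℝ) 1, |y ^ (-b) * g (a - y * s)| ≤ 2 * s ^ b := by
  have hpos : ∀ᶠ w in 𝓝[<] a, 0 < (a - w) ^ b :=
    eventually_mem_nhdsWithin.mono fun w hw => rpow_pos_of_pos (sub_pos.mpr hw) b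
  obtain ⟨l, hl, hsub⟩ :=
    mem_nhdsLT_iff_exists_Ioo_subset.mp (eventually_abs_le_two_mul_of_tendsto_div hlim hpos)
  filter_upwards [Ioo_mem_nhdsGT (sub_pos.mpr hl)] with y ⟨hy0, hyl⟩ s ⟨hs0, hs1⟩
  have hw : a - y * s ∈ Ioo l a := ⟨by nlinarith, by nlinarith⟩
  have hg : |g (a - y * s)| ≤ 2 * (a - (a - y * s)) ^ b := hsub hw
  rw [sub_sub_cancel, mul_rpow hy0.le hs0.le] at hg
  rw [abs_mul, abs_of_pos (rpow_pos_of_pos hy0 _), rpow_neg hy0.le]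
  have hyb : 0 < y ^ b := rpow_pos_of_pos hy0 b
  calc (y ^ b)⁻¹ * |g (a - y * s)| ≤ (y ^ b)⁻¹ * (2 * (y ^ b * s ^ b)) := by gcongr
    _ = 2 * s ^ b := by field_simp

theorem tendsto_rpow_neg_mul_comp_sub_mul
    (hlim : Tendsto (fun w => g w / (a - w) ^ b) (𝓝[<] a) (𝓝 1)) {s : ℝ} (hs : 0 < s) :
    Tendsto (fun y => y ^ (-b) * g (a - y * s)) (𝓝[>] 0) (𝓝 (s ^ b)) := by
  have hw : Tendsto (fun y => a - y * s) (𝓝[>] 0) (𝓝[<] a) := by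
    refine tendsto_nhdsWithin_of_tendsto_nhds_of_eventually_within _ ?_ ?_
    · have hc : Continuous fun y : ℝ => a - y * s := by fun_prop
      simpa using (hc.tendsto 0).mono_left nhdsWithin_le_nhds
    · filter_upwards [self_mem_nhdsWithin] with y (hy : 0 < y)
      exact sub_lt_self a (mul_pos hy hs)
  have h := (hlim.comp hw).mul_const (s ^ b)
  rw [one_mul] at h
  refine h.congr' ?_
  filter_upwards [self_mem_nhdsWithin] with y (hy : 0 < y)
  have hyb : 0 < y ^ b := rpow_pos_of_pos hy b
  have hsb : 0 < s ^ b := rpow_pos_of_pos hs b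
  simp only [Function.comp_apply, sub_sub_cancel, mul_rpow hy.le hs.le, rpow_neg hy.le]
  field_simp

theorem tendsto_integral_rpow_neg_mul_comp_sub_mul (hmeas : Measurable g)
    (hlim : Tendsto (fun w => g w / (a - w) ^ b) (𝓝[<] a) (𝓝 1)) (hb : 0 ≤ b)
    {q : ℝ} (hq : 0 < q) :
    Tendsto (fun y => ∫ t in Ioo (0 : ℝ) 1,
        y ^ (-b) * g (a - y * (1 - t)) * (t ^ (q - 1) * exp (-(y * t) / 2)))
      (𝓝[>] 0) (𝓝 (∫ t in Ioo (0 : ℝ) 1, t ^ (q - 1) * (1 - t) ^ b)) := by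
  refine tendsto_integral_filter_of_dominated_convergence (fun t => 2 * t ^ (q - 1))
    (Eventually.of_forall fun y => (by fun_prop : Measurable _).aestronglyMeasurable) ?_ ?_ ?_
  · filter_upwards [eventually_forall_abs_rpow_neg_mul_le hlim, self_mem_nhdsWithin]
      with y hy (hy0 : 0 < y)
    filter_upwards [ae_restrict_mem measurableSet_Ioo] with t ⟨ht0, ht1⟩
    have hg := hy (1 - t) ⟨by linarith, by linarith⟩
    have hexp : exp (-(y * t) / 2) ≤ 1 := exp_le_one_iff.mpr (by nlinarith)
    have h1t : (1 - t) ^ b ≤ 1 := rpow_le_one (by linarith) (by linarith) hb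
    rw [norm_mul, Real.norm_eq_abs, Real.norm_eq_abs,
      abs_of_pos (mul_pos (rpow_pos_of_pos ht0 _) (exp_pos _))]
    calc |y ^ (-b) * g (a - y * (1 - t))| * (t ^ (q - 1) * exp (-(y * t) / 2))
        ≤ (2 * 1) * (t ^ (q - 1) * 1) := by gcongr; linarith
      _ = 2 * t ^ (q - 1) := by ring
  · exact ((intervalIntegral.integrableOn_Ioo_rpow_iff zero_lt_one).mpr (by linarith)).const_mul 2
  · filter_upwards [ae_restrict_mem measurableSet_Ioo] with t ⟨ht0, ht1⟩
    have hexp : Tendsto (fun y => exp (-(y * t) / 2)) (𝓝[>] 0) (𝓝 1) := by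
      have hc : Continuous fun y : ℝ => exp (-(y * t) / 2) := by fun_prop
      simpa using (hc.tendsto 0).mono_left nhdsWithin_le_nhds
    have h := (tendsto_rpow_neg_mul_comp_sub_mul hlim (sub_pos.mpr ht1)).mul
      (hexp.const_mul (t ^ (q - 1)))
    rwa [mul_one, mul_comm] at h

end Rescaling

theorem stmt1_general (p : ℕ) (hp : 2 ≤ p) (a : ℝ) (b : ℝ) (hb : 0 ≤ b)
    (g : ℝ → ℝ) (hmeas : Measurable g)
    (hlim : Tendsto (fun w => g w / (a - w) ^ b) (nhdsWithin a (Set.Iio a)) (nhds 1)) :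
    Tendsto (Hfun p a b g) (nhdsWithin 0 (Set.Ioi 0))
      (nhds (Real.Gamma (b + 1) /
        (Real.Gamma (b + ((p : ℝ) + 1) / 2) * 2 ^ (((p : ℝ) - 1) / 2)))) := by
  set q : ℝ := ((p : ℝ) - 1) / 2 with hq_def
  have hq : 0 < q := by
    have : (2 : ℝ) ≤ p := by exact_mod_cast hp
    linarith
  have hbeta : (Gamma q * 2 ^ q)⁻¹ * ∫ t in Ioo (0 : ℝ) 1, t ^ (q - 1) * (1 - t) ^ b =
      Gamma (b + 1) / (Gamma (b + ((p : ℝ) + 1) / 2) * 2 ^ q) := by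
    have h := integral_Ioo_rpow_mul_one_sub_rpow hq (v := b + 1) (by linarith)
    rw [add_sub_cancel_right] at h
    rw [h, show b + ((p : ℝ) + 1) / 2 = q + (b + 1) by linarith]
    have : Gamma q ≠ 0 := (Gamma_pos_of_pos hq).ne'
    field_simp
  rw [← hbeta]
  refine ((tendsto_integral_rpow_neg_mul_comp_sub_mul hmeas hlim hb hq).const_mul _).congr' ?_
  filter_upwards [self_mem_nhdsWithin] with y hy
  exact (Hfun_eq_integral_Ioo_zero_one g hq_def hy).symm

theorem stmt1 (p : ℕ) (hp : 2 ≤ p) (a : ℝ) (ha : 0 < a) (b : ℝ) (hb : 0 ≤ b)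
    (g : ℝ → ℝ) (hmeas : Measurable g)
    (hbound : ∃ M, ∀ w ∈ Set.Icc (0 : ℝ) a, |g w| ≤ M)
    (hlim : Tendsto (fun w => g w / (a - w) ^ b) (nhdsWithin a (Set.Iio a)) (nhds 1)) :
    Tendsto (Hfun p a b g) (nhdsWithin 0 (Set.Ioi 0))
      (nhds (Real.Gamma (b + 1) /
        (Real.Gamma (b + ((p : ℝ) + 1) / 2) * 2 ^ (((p : ℝ) - 1) / 2)))) :=
  stmt1_general p hp a b hb g hmeas hlim
end

section
/- Let p ≥ 2, a > 0, b ≥ 0, q = (p-1)/2, and let g : [0,a] → ℝ be bounded and measurable with lim_{w→a⁻} g(w)/(a-w)^b = 1. Define H(y) = y^(-(b+q)) · ∫_0^y g(v + a - y) f_{p-1}(v) dv for y ∈ (0,a]. Then H is bounded on (0,a]. -/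
/-! Near `a` the hypothesis on `g` gives `|g w| ≤ K (a - w)^b`, and boundedness of `g` extends
this to all of `[0, a)`. Hence the integrand of `H(y)` is at most `K y^b` times the chi-squared
density, which is `O(v^(q-1))`; integrating over `(0, y)` yields `O(y^(b+q))`, exactly cancelling
the prefactor `y^(-(b+q))`. -/

open MeasureTheory Real Filter

open Set

lemma abs_chiSqPDF_le {k v : ℝ} (hk : 0 < k) (hv : 0 ≤ v) :
    |chiSqPDF k v| ≤ v ^ (k / 2 - 1) / (Gamma (k / 2) * 2 ^ (k / 2)) := by
  have hGamma : 0 < Gamma (k / 2) := Gamma_pos_of_pos (by positivity)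
  have hexp : exp (-v / 2) ≤ 1 := exp_le_one_iff.mpr (by linarith)
  rw [chiSqPDF, abs_of_nonneg (by positivity)]
  gcongr
  exact mul_le_of_le_one_right (rpow_nonneg hv _) hexp

lemma abs_setIntegral_Ioo_zero_le_of_abs_le_rpow {F : ℝ → ℝ} {C s y : ℝ} (hs : 0 < s)
    (hy : 0 < y) (hF : ∀ v ∈ Ioo 0 y, |F v| ≤ C * v ^ (s - 1)) :
    |∫ v in Ioo 0 y, F v| ≤ C * y ^ s / s := by
  have hint : IntegrableOn (fun v : ℝ => C * v ^ (s - 1)) (Ioo 0 y) :=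
    ((intervalIntegral.intervalIntegrable_rpow' (by linarith : (-1 : ℝ) < s - 1)).1.mono_set
      Ioo_subset_Ioc_self).const_mul C
  have hbound : ∀ᵐ v ∂volume.restrict (Ioo 0 y), ‖F v‖ ≤ C * v ^ (s - 1) :=
    (ae_restrict_iff' measurableSet_Ioo).2 (Eventually.of_forall hF)
  have hvalue : ∫ v in Ioo 0 y, C * v ^ (s - 1) = C * y ^ s / s := by
    rw [integral_const_mul, ← integral_Ioc_eq_integral_Ioo, ← intervalIntegral.integral_of_le hy.le,
      integral_rpow (Or.inl (by linarith)), sub_add_cancel, zero_rpow hs.ne', sub_zero, mul_div_assoc]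
  exact hvalue ▸ norm_integral_le_of_norm_le hint hbound

lemma exists_abs_le_mul_rpow_of_tendsto {g : ℝ → ℝ} {a b c L M : ℝ} (hb : 0 ≤ b)
    (hM : ∀ w ∈ Ico c a, |g w| ≤ M)
    (hlim : Tendsto (fun w => g w / (a - w) ^ b) (nhdsWithin a (Iio a)) (nhds L)) :
    ∃ K, 0 ≤ K ∧ ∀ w ∈ Ico c a, |g w| ≤ K * (a - w) ^ b := by
  have hnear : ∀ᶠ w in nhdsWithin a (Iio a), |g w / (a - w) ^ b| ≤ |L| + 1 :=
    (hlim.abs.eventually (gt_mem_nhds (lt_add_one |L|))).mono fun _ => le_of_lt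
  obtain ⟨l, hla, hl⟩ := mem_nhdsLT_iff_exists_Ioo_subset.1 hnear
  have hal : 0 < (a - l) ^ b := rpow_pos_of_pos (sub_pos.2 hla) b
  refine ⟨max (|L| + 1) (M / (a - l) ^ b), by positivity, fun w hw => ?_⟩
  have haw : 0 < (a - w) ^ b := rpow_pos_of_pos (sub_pos.2 hw.2) b
  rcases lt_or_ge l w with hlw | hwl
  · have hratio : |g w / (a - w) ^ b| ≤ |L| + 1 := hl ⟨hlw, hw.2⟩
    rw [abs_div, abs_of_pos haw, div_le_iff₀ haw] at hratio
    exact hratio.trans (mul_le_mul_of_nonneg_right (le_max_left _ _) haw.le)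
  · have hM0 : 0 ≤ M := (abs_nonneg _).trans (hM w hw)
    have hdist : (a - l) ^ b ≤ (a - w) ^ b := rpow_le_rpow (sub_pos.2 hla).le (by linarith) hb
    calc |g w| ≤ M := hM w hw
      _ ≤ M / (a - l) ^ b * (a - w) ^ b := by
        rw [div_mul_eq_mul_div, le_div_iff₀ hal]; exact mul_le_mul_of_nonneg_left hdist hM0
      _ ≤ _ := mul_le_mul_of_nonneg_right (le_max_right _ _) haw.le

lemma abs_Hfun_le_of_abs_le_mul_rpow {p : ℕ} {a b K : ℝ} {g : ℝ → ℝ} (hp : 2 ≤ p) (hb : 0 ≤ b)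
    (hK : 0 ≤ K) (hgK : ∀ w ∈ Ico 0 a, |g w| ≤ K * (a - w) ^ b) {y : ℝ} (hy : y ∈ Ioc 0 a) :
    |Hfun p a b g y| ≤
      K / (Gamma (((p : ℝ) - 1) / 2) * 2 ^ (((p : ℝ) - 1) / 2)) / (((p : ℝ) - 1) / 2) := by
  obtain ⟨hy, hya⟩ := hy
  have hk : (0 : ℝ) < p - 1 := by linarith [show (2 : ℝ) ≤ p by exact_mod_cast hp]
  set q : ℝ := ((p : ℝ) - 1) / 2
  set C : ℝ := Gamma q * 2 ^ q
  have hq : 0 < q := by positivity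
  have hintegrand : ∀ v ∈ Ioo 0 y,
      |g (v + a - y) * chiSqPDF ((p : ℝ) - 1) v| ≤ K * y ^ b / C * v ^ (q - 1) := by
    intro v ⟨hv, hvy⟩
    have hg : |g (v + a - y)| ≤ K * y ^ b := by
      refine (hgK _ ⟨by linarith, by linarith⟩).trans (mul_le_mul_of_nonneg_left ?_ hK)
      exact rpow_le_rpow (by linarith) (by linarith) hb
    rw [abs_mul, div_mul_eq_mul_div, mul_div_assoc]
    exact mul_le_mul hg (abs_chiSqPDF_le hk hv.le) (abs_nonneg _) (by positivity)
  have hcancel : y ^ (-(b + q)) * (y ^ b * y ^ q) = 1 := by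
    rw [← rpow_add hy, ← rpow_add hy, neg_add_cancel, rpow_zero]
  calc |Hfun p a b g y|
      = y ^ (-(b + q)) * |∫ v in Ioo 0 y, g (v + a - y) * chiSqPDF ((p : ℝ) - 1) v| := by
        rw [Hfun, abs_mul, abs_of_nonneg (rpow_nonneg hy.le _)]
    _ ≤ y ^ (-(b + q)) * (K * y ^ b / C * y ^ q / q) := by
        gcongr; exact abs_setIntegral_Ioo_zero_le_of_abs_le_rpow hq hy hintegrand
    _ = y ^ (-(b + q)) * (y ^ b * y ^ q) * (K / C / q) := by ring
    _ = K / C / q := by rw [hcancel, one_mul]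

theorem stmt2_general (p : ℕ) (hp : 2 ≤ p) (a : ℝ) (b : ℝ) (hb : 0 ≤ b)
    (g : ℝ → ℝ)
    (hbound : ∃ M, ∀ w ∈ Set.Icc (0 : ℝ) a, |g w| ≤ M)
    (hlim : Tendsto (fun w => g w / (a - w) ^ b) (nhdsWithin a (Set.Iio a)) (nhds 1)) :
    ∃ M : ℝ, ∀ y ∈ Set.Ioc (0 : ℝ) a, |Hfun p a b g y| ≤ M := by
  obtain ⟨M, hM⟩ := hbound
  obtain ⟨K, hK, hgK⟩ := exists_abs_le_mul_rpow_of_tendsto hb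
    (fun w hw => hM w (Ico_subset_Icc_self hw)) hlim
  exact ⟨_, fun y hy => abs_Hfun_le_of_abs_le_mul_rpow hp hb hK hgK hy⟩

theorem stmt2 (p : ℕ) (hp : 2 ≤ p) (a : ℝ) (ha : 0 < a) (b : ℝ) (hb : 0 ≤ b)
    (g : ℝ → ℝ) (hmeas : Measurable g)
    (hbound : ∃ M, ∀ w ∈ Set.Icc (0 : ℝ) a, |g w| ≤ M)
    (hlim : Tendsto (fun w => g w / (a - w) ^ b) (nhdsWithin a (Set.Iio a)) (nhds 1)) :
    ∃ M : ℝ, ∀ y ∈ Set.Ioc (0 : ℝ) a, |Hfun p a b g y| ≤ M :=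
  stmt2_general p hp a b hb g hbound hlim
end

section
/- Let p ≥ 3, a > 0, and let φ : [0,∞) → ℝ be weakly differentiable with bounded derivative, satisfying 0 < φ(w) ≤ w on (0,a) and φ(w) = 0 on [a,∞). Suppose lim_{w→a⁻} φ'(w) = 0 and there exist ε ∈ (0,1) and γ > 1 such that -γ < (a-w)·φ'(w)/φ(w) < -1/γ for all w ∈ (εa, a). Then there exists a constant c > 0 and ε'' ∈ (0,1) such that r_φ(w) ≥ c·(a-w)^(γ-1) for all w ∈ (ε''a, a), where r_φ(w) = (φ(w)/w)·(φ(w) - 2(p-2)) - 4φ'(w). -/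
/-!
The condition `(a - w) φ'(w) / φ(w) > -γ` says that `φ(t) (a - t)^(-γ)` is nondecreasing near `a`,
so `φ(w) ≳ (a - w)^γ`. The condition `(a - w) φ'(w) / φ(w) < -1/γ` makes `-4 φ'(w)` at least
`4 φ(w) / (γ (a - w))`; once `w` is large enough that `γ (p - 2) (a - w) ≤ w`, half of this absorbs
the negative term `-2 (p - 2) φ(w) / w`, leaving `r_φ(w) ≥ 2 φ(w) / (γ (a - w)) ≳ (a - w)^(γ - 1)`.
-/

open Filter
open Set

/-- The paper's `r_φ` in dimension `p`. -/
noncomputable def steinRisk (p : ℝ) (φ φ' : ℝ → ℝ) (w : ℝ) : ℝ :=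
  φ w / w * (φ w - 2 * (p - 2)) - 4 * φ' w

theorem hasDerivAt_mul_sub_rpow {f : ℝ → ℝ} {f' a r t : ℝ} (hf : HasDerivAt f f' t)
    (ht : t < a) :
    HasDerivAt (fun s => f s * (a - s) ^ r) ((a - t) ^ (r - 1) * ((a - t) * f' - r * f t)) t := by
  have hne : a - t ≠ 0 := (sub_pos.2 ht).ne'
  have hpow : HasDerivAt (fun s => (a - s) ^ r) (r * (a - t) ^ (r - 1) * -1) t :=
    (Real.hasDerivAt_rpow_const (Or.inl hne)).comp t ((hasDerivAt_id t).const_sub a)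
  have hsplit : (a - t) ^ r = (a - t) ^ (r - 1) * (a - t) := by
    rw [Real.rpow_sub_one hne, div_mul_cancel₀ _ hne]
  refine (hf.mul hpow).congr_deriv ?_
  rw [hsplit]
  ring

theorem monotoneOn_mul_sub_rpow_neg {f f' : ℝ → ℝ} {a u γ : ℝ}
    (hf : ∀ t ∈ Ico u a, HasDerivAt f (f' t) t)
    (hgrowth : ∀ t ∈ Ioo u a, -γ * f t ≤ (a - t) * f' t) :
    MonotoneOn (fun t => f t * (a - t) ^ (-γ)) (Ico u a) := by
  have hderiv : ∀ t ∈ Ico u a, HasDerivAt (fun s => f s * (a - s) ^ (-γ))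
      ((a - t) ^ (-γ - 1) * ((a - t) * f' t - -γ * f t)) t :=
    fun t ht => hasDerivAt_mul_sub_rpow (hf t ht) ht.2
  refine monotoneOn_of_deriv_nonneg (convex_Ico u a)
    (fun t ht => (hderiv t ht).continuousAt.continuousWithinAt) (fun t ht => ?_) (fun t ht => ?_)
  all_goals rw [interior_Ico] at ht
  · exact (hderiv t (Ioo_subset_Ico_self ht)).differentiableAt.differentiableWithinAt
  · rw [(hderiv t (Ioo_subset_Ico_self ht)).deriv]
    exact mul_nonneg (Real.rpow_nonneg (sub_pos.2 ht.2).le _) (by linarith [hgrowth t ht])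

theorem div_sub_rpow_mul_sub_rpow_le {f f' : ℝ → ℝ} {a u γ w : ℝ}
    (hf : ∀ t ∈ Ico u a, HasDerivAt f (f' t) t)
    (hgrowth : ∀ t ∈ Ioo u a, -γ * f t ≤ (a - t) * f' t) (huw : u ≤ w) (hwa : w < a) :
    f u / (a - u) ^ γ * (a - w) ^ γ ≤ f w := by
  have hua : 0 ≤ a - u := by linarith
  have hmono := monotoneOn_mul_sub_rpow_neg hf hgrowth ⟨le_rfl, huw.trans_lt hwa⟩ ⟨huw, hwa⟩ huw
  simp only [Real.rpow_neg hua, Real.rpow_neg (sub_pos.2 hwa).le, ← div_eq_mul_inv] at hmono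
  rwa [le_div_iff₀ (Real.rpow_pos_of_pos (sub_pos.2 hwa) γ)] at hmono

theorem div_mul_le_steinRisk {p γ a w : ℝ} {φ φ' : ℝ → ℝ} (hw : 0 < w) (hwa : w < a)
    (hγ : 0 < γ) (hφ : 0 ≤ φ w) (hdecay : γ * ((a - w) * φ' w) ≤ -φ w)
    (hw_large : γ * (p - 2) * (a - w) ≤ w) :
    2 / (γ * (a - w)) * φ w ≤ steinRisk p φ φ' w := by
  have hδ : 0 < γ * (a - w) := mul_pos hγ (sub_pos.2 hwa)
  have hlinear : (p - 2) * φ w / w ≤ φ w / (γ * (a - w)) := by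
    rw [div_le_div_iff₀ hw hδ]
    nlinarith
  have hderiv : φ w / (γ * (a - w)) ≤ -φ' w := by
    rw [div_le_iff₀ hδ]
    linarith
  have hquad : 0 ≤ φ w / w * φ w := by positivity
  have hrisk : steinRisk p φ φ' w = φ w / w * φ w - 2 * ((p - 2) * φ w / w) - 4 * φ' w := by
    unfold steinRisk
    ring
  rw [hrisk, show 2 / (γ * (a - w)) * φ w = 2 * (φ w / (γ * (a - w))) by ring]
  linarith

theorem stmt9_general (p : ℕ) (hp : 3 ≤ p) (a : ℝ) (ha : 0 < a)
    (φ φ' : ℝ → ℝ) (hderiv : ∀ w : ℝ, HasDerivAt φ (φ' w) w)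
    (hpos : ∀ w ∈ Set.Ioo (0 : ℝ) a, 0 < φ w ∧ φ w ≤ w)
    (ε γ : ℝ) (hε : ε ∈ Set.Ioo (0 : ℝ) 1) (hγ : 1 < γ)
    (hratio : ∀ w ∈ Set.Ioo (ε * a) a,
      -γ < (a - w) * φ' w / φ w ∧ (a - w) * φ' w / φ w < -(1 / γ)) :
    ∃ c > (0 : ℝ), ∃ ε'' ∈ Set.Ioo (0 : ℝ) 1, ∀ w ∈ Set.Ioo (ε'' * a) a,
      c * (a - w) ^ (γ - 1) ≤ φ w / w * (φ w - 2 * ((p : ℝ) - 2)) - 4 * φ' w := by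
  have hγ0 : 0 < γ := one_pos.trans hγ
  have hK : 0 < γ * ((p : ℝ) - 2) := mul_pos hγ0 (by linarith [(Nat.ofNat_le_cast.2 hp : (3 : ℝ) ≤ p)])
  have hεa : 0 < ε * a := mul_pos hε.1 ha
  have hεa_lt : ε * a < a := mul_lt_of_lt_one_left ha hε.2
  have hφ_pos : ∀ w ∈ Ioo (ε * a) a, 0 < φ w := fun w hw => (hpos w ⟨hεa.trans hw.1, hw.2⟩).1
  have hgrowth : ∀ w ∈ Ioo (ε * a) a, -γ * φ w ≤ (a - w) * φ' w := fun w hw =>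
    ((lt_div_iff₀ (hφ_pos w hw)).1 (hratio w hw).1).le
  have hdecay : ∀ w ∈ Ioo (ε * a) a, γ * ((a - w) * φ' w) ≤ -φ w := fun w hw => by
    have h := (div_lt_iff₀ (hφ_pos w hw)).1 (hratio w hw).2
    have : γ * (-(1 / γ) * φ w) = -φ w := by field_simp
    nlinarith
  set K := γ * ((p : ℝ) - 2)
  set c := φ (ε * a) / (a - ε * a) ^ γ
  have hc : 0 < c := div_pos (hpos _ ⟨hεa, hεa_lt⟩).1 (Real.rpow_pos_of_pos (by linarith) γ)
  refine ⟨2 * c / γ, by positivity, max ε (K / (1 + K)),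
    ⟨lt_max_of_lt_left hε.1, max_lt hε.2 ((div_lt_one (by linarith)).2 (by linarith))⟩,
    fun w hw => ?_⟩
  obtain ⟨hw_lo, hwa⟩ := hw
  rw [max_mul_of_nonneg _ _ ha.le, max_lt_iff] at hw_lo
  obtain ⟨hεw, hKw⟩ := hw_lo
  have hw_large : K * (a - w) ≤ w := by
    rw [div_mul_eq_mul_div, div_lt_iff₀ (by linarith)] at hKw
    linarith
  calc 2 * c / γ * (a - w) ^ (γ - 1) = 2 / (γ * (a - w)) * (c * (a - w) ^ γ) := by
        rw [Real.rpow_sub_one (sub_pos.2 hwa).ne']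
        field_simp
    _ ≤ 2 / (γ * (a - w)) * φ w := by
        gcongr
        exact div_sub_rpow_mul_sub_rpow_le (fun t _ => hderiv t) hgrowth hεw.le hwa
    _ ≤ steinRisk p φ φ' w :=
        div_mul_le_steinRisk (hεa.trans hεw) hwa hγ0 (hφ_pos w ⟨hεw, hwa⟩).le
          (hdecay w ⟨hεw, hwa⟩) hw_large

theorem stmt9 (p : ℕ) (hp : 3 ≤ p) (a : ℝ) (ha : 0 < a)
    (φ φ' : ℝ → ℝ) (hderiv : ∀ w : ℝ, HasDerivAt φ (φ' w) w)
    (hbdd : ∃ C, ∀ w : ℝ, |φ' w| ≤ C)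
    (hpos : ∀ w ∈ Set.Ioo (0 : ℝ) a, 0 < φ w ∧ φ w ≤ w)
    (hzero : ∀ w : ℝ, a ≤ w → φ w = 0)
    (hlim : Tendsto φ' (nhdsWithin a (Set.Iio a)) (nhds 0))
    (ε γ : ℝ) (hε : ε ∈ Set.Ioo (0 : ℝ) 1) (hγ : 1 < γ)
    (hratio : ∀ w ∈ Set.Ioo (ε * a) a,
      -γ < (a - w) * φ' w / φ w ∧ (a - w) * φ' w / φ w < -(1 / γ)) :
    ∃ c > (0 : ℝ), ∃ ε'' ∈ Set.Ioo (0 : ℝ) 1, ∀ w ∈ Set.Ioo (ε'' * a) a,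
      c * (a - w) ^ (γ - 1) ≤ φ w / w * (φ w - 2 * ((p : ℝ) - 2)) - 4 * φ' w :=
  stmt9_general p hp a ha φ φ' hderiv hpos ε γ hε hγ hratio
end
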